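/- arXiv:2512.02214 — 3 statements merged into one kernel-verified Lean document; each statement's English description precedes it below -/
import Mathlib

section
/- Let M ≥ 1, t > 0, and for each i ∈ {1,...,M} let d_i > 0 and n_i ≥ 0 with ∑_i n_i = t. Suppose the potentials are balanced up to a factor 3, i.e., d_i √(n_i) ≤ 3 d_j √(n_j) for all i, j. Then for every j, n_j ≥ (t/81) · (1/d_j²) / (∑_{i=1}^M 1/d_i²). -/
/-
Squaring the balance condition φ_i ≤ 3 φ_j gives d_i² n_i ≤ 9 d_j² n_j, i.e.
n_i ≤ 9 d_j² n_j · (1/d_i²). Summing over i yields t ≤ 9 d_j² n_j ∑ 1/d_i², which is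
the claim with the better constant 9 in place of 81.
-/

open Finset

lemma sq_mul_le_of_mul_sqrt_le {a b c x y : ℝ} (ha : 0 ≤ a) (hx : 0 ≤ x) (hy : 0 ≤ y)
    (h : a * √x ≤ c * (b * √y)) : a ^ 2 * x ≤ c ^ 2 * b ^ 2 * y := by
  have hsq := pow_le_pow_left₀ (by positivity) h 2
  rwa [mul_pow, mul_pow, mul_pow, Real.sq_sqrt hx, Real.sq_sqrt hy, ← mul_assoc] at hsq

section Balanced

variable {ι : Type*} [Fintype ι] {c : ℝ} {d n : ι → ℝ}

lemma sum_le_of_mul_sqrt_le (hd : ∀ i, 0 < d i) (hn : ∀ i, 0 ≤ n i) {j : ι}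
    (hbal : ∀ i, d i * √(n i) ≤ c * (d j * √(n j))) :
    ∑ i, n i ≤ c ^ 2 * d j ^ 2 * n j * ∑ i, 1 / d i ^ 2 := by
  rw [mul_sum]
  refine sum_le_sum fun i _ => ?_
  have hdi : 0 < d i ^ 2 := by have := hd i; positivity
  rw [mul_one_div, le_div_iff₀ hdi, mul_comm]
  exact sq_mul_le_of_mul_sqrt_le (hd i).le (hn i) (hn j) (hbal i)

lemma div_sq_mul_inv_sq_div_sum_le_of_mul_sqrt_le (hd : ∀ i, 0 < d i) (hn : ∀ i, 0 ≤ n i)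
    {j : ι} (hbal : ∀ i, d i * √(n i) ≤ c * (d j * √(n j))) :
    (∑ i, n i) / c ^ 2 * (1 / d j ^ 2) / ∑ i, 1 / d i ^ 2 ≤ n j := by
  rw [div_mul_div_comm, mul_one, div_div]
  refine div_le_of_le_mul₀ (by positivity) (hn j) ?_
  linarith [sum_le_of_mul_sqrt_le hd hn hbal]

end Balanced

theorem stmt_1_general (M : ℕ) (t : ℝ) (ht : 0 < t) (d n : Fin M → ℝ)
    (hd : ∀ i, 0 < d i) (hn : ∀ i, 0 ≤ n i) (hsum : ∑ i, n i = t)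
    (hbal : ∀ i j, d i * Real.sqrt (n i) ≤ 3 * (d j * Real.sqrt (n j))) :
    ∀ j, n j ≥ (t / 81) * (1 / (d j) ^ 2) / (∑ i, 1 / (d i) ^ 2) := by
  intro j
  calc (t / 81) * (1 / d j ^ 2) / ∑ i, 1 / d i ^ 2
      ≤ t / 3 ^ 2 * (1 / d j ^ 2) / ∑ i, 1 / d i ^ 2 := by gcongr; norm_num
    _ ≤ n j := hsum ▸ div_sq_mul_inv_sq_div_sum_le_of_mul_sqrt_le hd hn (hbal · j)

theorem stmt_1 (M : ℕ) (hM : 1 ≤ M) (t : ℝ) (ht : 0 < t) (d n : Fin M → ℝ)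
    (hd : ∀ i, 0 < d i) (hn : ∀ i, 0 ≤ n i) (hsum : ∑ i, n i = t)
    (hbal : ∀ i j, d i * Real.sqrt (n i) ≤ 3 * (d j * Real.sqrt (n j))) :
    ∀ j, n j ≥ (t / 81) * (1 / (d j) ^ 2) / (∑ i, 1 / (d i) ^ 2) :=
  stmt_1_general M t ht d n hd hn hsum hbal
end

section
/- Let v* be a real number, and for agent i let n > 0, let ū be its cumulative expected reward, u its cumulative realized reward, and suppose: (a) |u − ū| ≤ c√(n · L) for some c, L ≥ 0 (concentration), (b) n·v* − ū ≤ d√n for some d ≥ 0 (agent i is well-specified with regret bound d√n). Then u/n + c√(L/n) + d/√n ≥ v* ≥ ū/n − 0, and in particular for any other agent j with counts n_j > 0, realized reward u_j, expected reward ū_j satisfying the same concentration |u_j − ū_j| ≤ c√(n_j · L_j) and ū_j/n_j ≤ v*, we have u/n + c√(L/n) + d/√n ≥ u_j/n_j − c√(L_j/n_j). -/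
/-! Dividing the concentration bound and the regret bound by the number of rounds `n` turns them
into per-round bounds: `v* ≤ ū/n + d/√n ≤ u/n + c√(L/n) + d/√n`, while for any other agent
`u_j/n_j - c√(L_j/n_j) ≤ ū_j/n_j ≤ v*`. -/

lemma Real.sqrt_mul_div_of_pos {n : ℝ} (hn : 0 < n) (L : ℝ) :
    √(n * L) / n = √(L / n) := by
  calc √(n * L) / n = √(n * L) / √(n ^ 2) := by rw [Real.sqrt_sq hn.le]
    _ = √(n * L / n ^ 2) := (Real.sqrt_div' _ (sq_nonneg n)).symm
    _ = √(L / n) := by congr 1; field_simp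

lemma abs_div_sub_div_le_of_abs_sub_le_mul_sqrt {n u ubar c L : ℝ} (hn : 0 < n)
    (h : |u - ubar| ≤ c * √(n * L)) : |u / n - ubar / n| ≤ c * √(L / n) := by
  rw [← sub_div, abs_div, abs_of_pos hn, ← Real.sqrt_mul_div_of_pos hn, mul_div_assoc']
  gcongr

lemma le_div_add_div_sqrt_of_mul_sub_le {n v ubar d : ℝ} (hn : 0 < n)
    (h : n * v - ubar ≤ d * √n) : v ≤ ubar / n + d / √n := by
  have hsqrt : d / √n = d * √n / n := by
    rw [div_eq_div_iff (Real.sqrt_pos.mpr hn).ne' hn.ne', mul_assoc, Real.mul_self_sqrt hn.le]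
  rw [hsqrt, ← add_div, le_div_iff₀ hn]
  linarith

theorem stmt_6_general (vstar : ℝ) (n u ubar c L d : ℝ)
    (hn : 0 < n)
    (hconc : |u - ubar| ≤ c * Real.sqrt (n * L))
    (hreg : n * vstar - ubar ≤ d * Real.sqrt n)
    (hopt : ubar / n ≤ vstar) :
    (u / n + c * Real.sqrt (L / n) + d / Real.sqrt n ≥ vstar) ∧
    (vstar ≥ ubar / n) ∧
    (∀ nj uj ubarj Lj : ℝ, 0 < nj → 0 ≤ Lj →
      |uj - ubarj| ≤ c * Real.sqrt (nj * Lj) → ubarj / nj ≤ vstar →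
      u / n + c * Real.sqrt (L / n) + d / Real.sqrt n ≥
        uj / nj - c * Real.sqrt (Lj / nj)) := by
  have hu := (abs_sub_le_iff.mp (abs_div_sub_div_le_of_abs_sub_le_mul_sqrt hn hconc)).2
  have hoptimistic : vstar ≤ u / n + c * √(L / n) + d / √n := by
    linarith [le_div_add_div_sqrt_of_mul_sub_le hn hreg]
  refine ⟨hoptimistic, hopt, fun nj uj ubarj Lj hnj _ hconcj hoptj => ?_⟩
  have huj := (abs_sub_le_iff.mp (abs_div_sub_div_le_of_abs_sub_le_mul_sqrt hnj hconcj)).1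
  linarith

theorem stmt_6 (vstar : ℝ) (n u ubar c L d : ℝ)
    (hn : 0 < n) (hc : 0 ≤ c) (hL : 0 ≤ L) (hd : 0 ≤ d)
    (hconc : |u - ubar| ≤ c * Real.sqrt (n * L))
    (hreg : n * vstar - ubar ≤ d * Real.sqrt n)
    (hopt : ubar / n ≤ vstar) :
    (u / n + c * Real.sqrt (L / n) + d / Real.sqrt n ≥ vstar) ∧
    (vstar ≥ ubar / n) ∧
    (∀ nj uj ubarj Lj : ℝ, 0 < nj → 0 ≤ Lj →
      |uj - ubarj| ≤ c * Real.sqrt (nj * Lj) → ubarj / nj ≤ vstar →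
      u / n + c * Real.sqrt (L / n) + d / Real.sqrt n ≥
        uj / nj - c * Real.sqrt (Lj / nj)) :=
  stmt_6_general vstar n u ubar c L d hn hconc hreg hopt
end

section
/- Let M ≥ 1 and suppose a process selects at each discrete step the index minimizing a potential φ^i, and after selecting index i its potential increases to at most 3 times the minimum potential at selection time, while unselected potentials are unchanged. If initially all potentials are equal, then at all times φ^i ≤ 3 φ^j for all i, j. -/
/-! Potentials never decrease, so a bound `φ i ≤ 3 φ j` survives every step in which `i` is not
selected. If `i` is the selected index, its new potential is at most three times its old one,
which was the minimum, hence at most three times the old, and so the new, value of any `φ j`. -/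

namespace BalancingLemma

variable {ι : Type*}

def IsBalanced (c : NNReal) (ψ : ι → NNReal) : Prop :=
  ∀ i j, ψ i ≤ c * ψ j

lemma isBalanced_of_forall_eq {c : NNReal} (hc : 1 ≤ c) {ψ : ι → NNReal}
    (h : ∀ i j, ψ i = ψ j) : IsBalanced c ψ := fun i j =>
  calc ψ i = ψ j := h i j
    _ ≤ c * ψ j := le_mul_of_one_le_left (ψ j).2 hc

variable {c : NNReal} {ψ ψ' : ι → NNReal} {k : ι}

lemma le_of_update (hup : ψ k ≤ ψ' k) (hfix : ∀ i, i ≠ k → ψ' i = ψ i) (j : ι) :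
    ψ j ≤ ψ' j := by
  rcases eq_or_ne j k with rfl | hj
  · exact hup
  · exact (hfix j hj).ge

lemma IsBalanced.update_min (hbal : IsBalanced c ψ) (hmin : ∀ i, ψ k ≤ ψ i)
    (hup : ψ k ≤ ψ' k) (hgrow : ψ' k ≤ c * ψ k) (hfix : ∀ i, i ≠ k → ψ' i = ψ i) :
    IsBalanced c ψ' := by
  intro i j
  have hj : c * ψ j ≤ c * ψ' j := mul_le_mul_right (le_of_update hup hfix j) c
  rcases eq_or_ne i k with rfl | hi
  · calc ψ' i ≤ c * ψ i := hgrow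
      _ ≤ c * ψ j := mul_le_mul_right (hmin j) c
      _ ≤ c * ψ' j := hj
  · calc ψ' i = ψ i := hfix i hi
      _ ≤ c * ψ j := hbal i j
      _ ≤ c * ψ' j := hj

end BalancingLemma

theorem stmt_10_general (M : ℕ) (φ : ℕ → Fin M → NNReal) (sel : ℕ → Fin M)
    (hmin : ∀ t i, φ t (sel t) ≤ φ t i)
    (hgrow : ∀ t, φ t (sel t) ≤ φ (t + 1) (sel t) ∧ φ (t + 1) (sel t) ≤ 3 * φ t (sel t))
    (hfix : ∀ t i, i ≠ sel t → φ (t + 1) i = φ t i)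
    (hinit : ∀ i j, φ 0 i = φ 0 j) :
    ∀ t i j, φ t i ≤ 3 * φ t j := by
  intro t
  induction t with
  | zero => exact BalancingLemma.isBalanced_of_forall_eq (by norm_num) hinit
  | succ t ih =>
    exact BalancingLemma.IsBalanced.update_min ih (hmin t) (hgrow t).1 (hgrow t).2 (hfix t)

theorem stmt_10 (M : ℕ) (hM : 1 ≤ M) (φ : ℕ → Fin M → NNReal) (sel : ℕ → Fin M)
    (hmin : ∀ t i, φ t (sel t) ≤ φ t i)
    (hgrow : ∀ t, φ t (sel t) ≤ φ (t + 1) (sel t) ∧ φ (t + 1) (sel t) ≤ 3 * φ t (sel t))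
    (hfix : ∀ t i, i ≠ sel t → φ (t + 1) i = φ t i)
    (hinit : ∀ i j, φ 0 i = φ 0 j) :
    ∀ t i j, φ t i ≤ 3 * φ t j :=
  stmt_10_general M φ sel hmin hgrow hfix hinit
end
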